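/- arXiv:2510.23959 — 8 statements merged into one kernel-verified Lean document; each statement's English description precedes it below -/
import Mathlib

section
/- Let f : X → Y be a continuous map between sober topological spaces. If every fiber of f is discrete (as a subspace), then the Krull dimension of X is at most the Krull dimension of Y. -/
/-!
Send an irreducible closed set `Z ⊆ X` to `closure (f '' Z)`. If `Z₁ ⊊ Z₂` had the same image,
their generic points `ξ₁, ξ₂` would map to generic points of the same irreducible closed set of
the `T₀` space `Y`, hence lie in one fiber, where `ξ₂ ⤳ ξ₁` forces `ξ₁ = ξ₂` because fibers are
discrete. So this map is strictly monotone, and chains in `X` give chains of the same length in `Y`.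
-/

open TopologicalSpace

section

variable {X Y : Type*} [TopologicalSpace X]

theorem Specializes.eq_of_discreteTopology_fiber {f : X → Y} {x x' : X} (h : x ⤳ x')
    (hfx : f x = f x') (hfib : DiscreteTopology (f ⁻¹' {f x'})) : x = x' :=
  congrArg Subtype.val
    ((subtype_specializes_iff (⟨x, hfx⟩ : f ⁻¹' {f x'}) ⟨x', rfl⟩).mpr h).eq

theorem IrreducibleCloseds.map_strictMono_of_discreteTopology_fiber [TopologicalSpace Y]
    [QuasiSober X] [T0Space Y]
    {f : X → Y} (hf : Continuous f) (hfib : ∀ y, DiscreteTopology (f ⁻¹' {y})) :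
    StrictMono (IrreducibleCloseds.map f hf) := by
  intro Z₁ Z₂ hlt
  refine (IrreducibleCloseds.map_mono hf hlt.le).lt_of_ne fun himage => hlt.ne ?_
  have hξ₁ := Z₁.isIrreducible.isGenericPoint_genericPoint Z₁.isClosed
  have hξ₂ := Z₂.isIrreducible.isGenericPoint_genericPoint Z₂.isClosed
  have himage' : closure (f '' Z₁) = closure (f '' Z₂) := congrArg SetLike.coe himage
  have hfξ : f Z₁.isIrreducible.genericPoint = f Z₂.isIrreducible.genericPoint :=
    (hξ₁.image hf).eq (himage' ▸ hξ₂.image hf)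
  have hξ : Z₂.isIrreducible.genericPoint = Z₁.isIrreducible.genericPoint :=
    (hξ₂.specializes (hlt.le hξ₁.mem)).eq_of_discreteTopology_fiber hfξ.symm (hfib _)
  exact SetLike.coe_injective (hξ₁.symm.trans (hξ ▸ hξ₂))

end

theorem stmt_0_general {X Y : Type*} [TopologicalSpace X] [TopologicalSpace Y]
    [QuasiSober X] [T0Space Y]
    (f : X → Y) (hf : Continuous f)
    (hfib : ∀ y : Y, DiscreteTopology (f ⁻¹' {y})) :
    topologicalKrullDim X ≤ topologicalKrullDim Y :=
  Order.krullDim_le_of_strictMono _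
    (IrreducibleCloseds.map_strictMono_of_discreteTopology_fiber hf hfib)

/-- Let `f : X → Y` be a continuous map between sober topological spaces. If every fiber
of `f` is discrete, then the Krull dimension of `X` is at most the Krull dimension of `Y`. -/
theorem stmt_0 {X Y : Type*} [TopologicalSpace X] [TopologicalSpace Y]
    [QuasiSober X] [T0Space X] [QuasiSober Y] [T0Space Y]
    (f : X → Y) (hf : Continuous f)
    (hfib : ∀ y : Y, DiscreteTopology (f ⁻¹' {y})) :
    topologicalKrullDim X ≤ topologicalKrullDim Y :=
  stmt_0_general f hf hfib
end

section
/- Let f : X → Y be a continuous map between sober topological spaces. If f is a closed map and surjective, then the Krull dimension of X is at least the Krull dimension of Y. -/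
/-!
In a sober T0 space, taking generic points identifies the irreducible closed subsets, ordered by
inclusion, with the points under the specialization order, so the topological Krull dimension is
the Krull dimension of that order. A closed map lifts specializations: if `f x ⤳ y` then `y` lies in
`closure {f x} ⊆ f '' closure {x}`. Hence, starting from a preimage of the most special point, every
chain of specializations in `Y` lifts step by step to a chain of the same length in `X`.
-/

open Order Relation

section Order

variable {α β : Type*}

lemma Relation.Fibration.lt_of_le [PartialOrder α] [Preorder β] {f : α → β}
    (hf : Fibration (· ≤ ·) (· ≤ ·) f) : Fibration (· < ·) (· < ·) f := by
  intro a b hb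
  obtain ⟨a', ha', rfl⟩ := hf hb.le
  exact ⟨a', ha'.lt_of_ne (by rintro rfl; exact hb.false), rfl⟩

lemma LTSeries.exists_lift_of_fibration [Preorder α] [Preorder β] {f : α → β}
    (hf : Fibration (· < ·) (· < ·) f) (hs : Function.Surjective f) (p : LTSeries β) :
    ∃ q : LTSeries α, q.length = p.length ∧ f q.head = p.head := by
  induction p using RelSeries.inductionOn with
  | singleton b =>
    obtain ⟨a, rfl⟩ := hs b
    exact ⟨RelSeries.singleton _ a, rfl, rfl⟩
  | cons p b hb ih =>
    obtain ⟨q, hlen, hhead⟩ := ih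
    obtain ⟨a, ha, rfl⟩ := hf (hhead ▸ hb : b < f q.head)
    exact ⟨q.cons a ha, by simp [hlen], rfl⟩

lemma Order.krullDim_le_of_fibration_of_surjective [Preorder α] [Preorder β] {f : α → β}
    (hf : Fibration (· < ·) (· < ·) f) (hs : Function.Surjective f) :
    krullDim β ≤ krullDim α :=
  iSup_le fun p ↦
    let ⟨q, hlen, _⟩ := p.exists_lift_of_fibration hf hs
    hlen ▸ q.length_le_krullDim

end Order

section Topology

variable {X Y : Type*} [TopologicalSpace X] [TopologicalSpace Y]

-- `x ≤ y ↔ y ⤳ x`, so `SpecializingMap f` is literally `Fibration (· ≤ ·) (· ≤ ·) f`.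
attribute [local instance] specializationOrder

lemma topologicalKrullDim_eq_krullDim [QuasiSober X] [T0Space X] :
    topologicalKrullDim X = krullDim X :=
  krullDim_eq_of_orderIso irreducibleSetEquivPoints

lemma SpecializingMap.topologicalKrullDim_le [QuasiSober X] [T0Space X] [QuasiSober Y]
    [T0Space Y] {f : X → Y} (hf : SpecializingMap f) (hs : Function.Surjective f) :
    topologicalKrullDim Y ≤ topologicalKrullDim X := by
  rw [topologicalKrullDim_eq_krullDim, topologicalKrullDim_eq_krullDim]
  exact krullDim_le_of_fibration_of_surjective (Fibration.lt_of_le hf) hs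

end Topology

theorem stmt_1_general {X Y : Type*} [TopologicalSpace X] [TopologicalSpace Y]
    [QuasiSober X] [T0Space X] [QuasiSober Y] [T0Space Y]
    (f : X → Y) (hclosed : IsClosedMap f)
    (hsurj : Function.Surjective f) :
    topologicalKrullDim Y ≤ topologicalKrullDim X :=
  hclosed.specializingMap.topologicalKrullDim_le hsurj

/-- Let `f : X → Y` be a continuous map between sober topological spaces. If `f` is a closed
map and surjective, then the Krull dimension of `X` is at least the Krull dimension of `Y`. -/
theorem stmt_1 {X Y : Type*} [TopologicalSpace X] [TopologicalSpace Y]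
    [QuasiSober X] [T0Space X] [QuasiSober Y] [T0Space Y]
    (f : X → Y) (hf : Continuous f) (hclosed : IsClosedMap f)
    (hsurj : Function.Surjective f) :
    topologicalKrullDim Y ≤ topologicalKrullDim X :=
  stmt_1_general f hclosed hsurj
end

section
/- Let {Xᵢ}_{i∈I} be a cofiltered system of spectral topological spaces with quasi-compact transition maps, and let X = lim Xᵢ be the inverse limit with projections πᵢ : X → Xᵢ. If all transition maps are closed, then each projection πᵢ is a closed map. -/
open TopologicalSpace Set Topology

section Patch

variable {Y : Type*} [TopologicalSpace Y]

/-- Generators of the patch (constructible) topology: quasi-compact opens and their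
complements. -/
def patchGen (Y : Type*) [TopologicalSpace Y] : Set (Set Y) :=
  {S | (IsOpen S ∧ IsCompact S) ∨ ∃ U : Set Y, IsOpen U ∧ IsCompact U ∧ S = Uᶜ}

/-- The patch (constructible) topology. -/
def patchTop (Y : Type*) [TopologicalSpace Y] : TopologicalSpace Y :=
  generateFrom (patchGen Y)

lemma patch_basic {S : Set Y} (hS : S ∈ patchGen Y) : IsOpen[patchTop Y] S :=
  isOpen_generateFrom_of_mem hS

lemma isOpen_patch_of_isOpen
    (hbase : ∀ (x : Y) (U : Set Y), IsOpen U → x ∈ U →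
      ∃ V : Set Y, IsOpen V ∧ IsCompact V ∧ x ∈ V ∧ V ⊆ U)
    {U : Set Y} (hU : IsOpen U) : IsOpen[patchTop Y] U := by
  have hrw : U = ⋃₀ {V | (IsOpen V ∧ IsCompact V) ∧ V ⊆ U} := by
    apply subset_antisymm
    · intro x hx
      obtain ⟨V, h1, h2, h3, h4⟩ := hbase x U hU hx
      exact ⟨V, ⟨⟨h1, h2⟩, h4⟩, h3⟩
    · rintro x ⟨V, ⟨-, hVU⟩, hxV⟩
      exact hVU hxV
  rw [hrw]
  exact TopologicalSpace.GenerateOpen.sUnion _ fun V hV => .basic _ (Or.inl hV.1)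

lemma isClosed_patch_of_isClosed
    (hbase : ∀ (x : Y) (U : Set Y), IsOpen U → x ∈ U →
      ∃ V : Set Y, IsOpen V ∧ IsCompact V ∧ x ∈ V ∧ V ⊆ U)
    {C : Set Y} (hC : IsClosed C) : IsClosed[patchTop Y] C := by
  exact @IsClosed.mk Y (patchTop Y) C (isOpen_patch_of_isOpen hbase hC.isOpen_compl)

lemma patch_t2 [T0Space Y]
    (hbase : ∀ (x : Y) (U : Set Y), IsOpen U → x ∈ U →
      ∃ V : Set Y, IsOpen V ∧ IsCompact V ∧ x ∈ V ∧ V ⊆ U) :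
    @T2Space Y (patchTop Y) := by
  refine @T2Space.mk Y (patchTop Y) fun x y hxy => ?_
  obtain ⟨U, hU, hxor⟩ := exists_isOpen_xor'_mem hxy
  rcases hxor with ⟨hxU, hyU⟩ | ⟨hyU, hxU⟩
  · obtain ⟨V, hVo, hVc, hxV, hVU⟩ := hbase x U hU hxU
    exact ⟨V, Vᶜ, patch_basic (Or.inl ⟨hVo, hVc⟩), patch_basic (Or.inr ⟨V, hVo, hVc, rfl⟩),
      hxV, fun h => hyU (hVU h), disjoint_compl_right⟩
  · obtain ⟨V, hVo, hVc, hyV, hVU⟩ := hbase y U hU hyU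
    exact ⟨Vᶜ, V, patch_basic (Or.inr ⟨V, hVo, hVc, rfl⟩), patch_basic (Or.inl ⟨hVo, hVc⟩),
      fun h => hxU (hVU h), hyV, disjoint_compl_left⟩

/-- A spectral-like space is compact in the patch topology. -/
lemma patch_compact [CompactSpace Y] [QuasiSober Y] [QuasiSeparatedSpace Y] :
    @CompactSpace Y (patchTop Y) := by
  refine @CompactSpace.mk Y (patchTop Y) ?_
  rw [@isCompact_iff_ultrafilter_le_nhds Y (patchTop Y)]
  intro F _
  -- the class of closed sets meeting every (qc open ∈ F) ∩ (closed ∈ F)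
  set S : Set (Set Y) := {Z | IsClosed Z ∧ ∀ U : Set Y, IsOpen U → IsCompact U → U ∈ F →
    ∀ C : Set Y, IsClosed C → C ∈ F → (Z ∩ (U ∩ C)).Nonempty} with hSdef
  have huniv : (univ : Set Y) ∈ S := by
    refine ⟨isClosed_univ, fun U _ _ hUF C _ hCF => ?_⟩
    simpa using F.nonempty_of_mem (Filter.inter_mem hUF hCF)
  have hchainlem : ∀ c ⊆ S, IsChain (· ⊆ ·) c → c.Nonempty →
      ∃ lb ∈ S, ∀ s ∈ c, lb ⊆ s := by
    -- chains have lower bounds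
    intro c hcS hchain hcne
    refine ⟨⋂₀ c, ⟨isClosed_sInter fun Z hZ => (hcS hZ).1, ?_⟩, fun s hs => sInter_subset_of_mem hs⟩
    intro U hUo hUc hUF C hCc hCF
    haveI : Nonempty c := hcne.to_subtype
    by_contra hemp
    rw [not_nonempty_iff_eq_empty] at hemp
    have hemp' : U ∩ ⋂ Z : c, (Z.1 ∩ C) = ∅ := by
      rw [eq_empty_iff_forall_notMem] at hemp ⊢
      intro y hy
      refine hemp y ⟨?_, hy.1, ?_⟩
      · exact fun Z hZ => (mem_iInter.mp hy.2 ⟨Z, hZ⟩).1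
      · obtain ⟨Z⟩ := ‹Nonempty c›
        exact (mem_iInter.mp hy.2 Z).2
    have hdir : Directed (· ⊇ ·) (fun Z : c => Z.1 ∩ C) := by
      intro Z₁ Z₂
      rcases hchain.total Z₁.2 Z₂.2 with h | h
      · exact ⟨Z₁, Subset.rfl, inter_subset_inter_left C h⟩
      · exact ⟨Z₂, inter_subset_inter_left C h, Subset.rfl⟩
    obtain ⟨Z, hZ⟩ := hUc.elim_directed_family_closed _
      (fun Z : c => (hcS Z.2).1.inter hCc) hemp' hdir
    obtain ⟨y, hy⟩ := (hcS Z.2).2 U hUo hUc hUF C hCc hCF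
    rw [eq_empty_iff_forall_notMem] at hZ
    exact hZ y ⟨hy.2.1, hy.1, hy.2.2⟩
  obtain ⟨m, -, hmin⟩ := zorn_superset_nonempty S hchainlem univ huniv
  -- m is nonempty
  have hmS : m ∈ S := hmin.1
  have hm_ne : m.Nonempty := by
    obtain ⟨y, hy⟩ := hmS.2 univ isOpen_univ isCompact_univ Filter.univ_mem univ isClosed_univ Filter.univ_mem
    exact ⟨y, hy.1⟩
  -- key: every open meeting m contains some m ∩ U ∩ C
  have hkey : ∀ v : Set Y, IsOpen v → (m ∩ v).Nonempty →
      ∃ U C : Set Y, IsOpen U ∧ IsCompact U ∧ U ∈ F ∧ IsClosed C ∧ C ∈ F ∧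
        m ∩ (U ∩ C) ⊆ v := by
    intro v hv hmv
    by_contra hno
    push_neg at hno
    have hmem : m \ v ∈ S := by
      refine ⟨hmS.1.sdiff hv, fun U hUo hUc hUF C hCc hCF => ?_⟩
      obtain ⟨y, hy, hyv⟩ := not_subset.mp (hno U C hUo hUc hUF hCc hCF)
      exact ⟨y, ⟨hy.1, hyv⟩, hy.2⟩
    have := hmin.2 hmem diff_subset
    obtain ⟨y, hym, hyv⟩ := hmv
    exact (this hym).2 hyv
  -- m is irreducible
  have hirr : IsIrreducible m := by
    refine ⟨hm_ne, fun u v hu hv hmu hmv => ?_⟩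
    obtain ⟨U₁, C₁, hU₁o, hU₁c, hU₁F, hC₁c, hC₁F, h₁⟩ := hkey u hu hmu
    obtain ⟨U₂, C₂, hU₂o, hU₂c, hU₂F, hC₂c, hC₂F, h₂⟩ := hkey v hv hmv
    obtain ⟨y, hym, hyU, hyC⟩ := hmS.2 (U₁ ∩ U₂) (hU₁o.inter hU₂o)
      (QuasiSeparatedSpace.inter_isCompact U₁ U₂ hU₁o hU₁c hU₂o hU₂c)
      (Filter.inter_mem hU₁F hU₂F) (C₁ ∩ C₂) (hC₁c.inter hC₂c) (Filter.inter_mem hC₁F hC₂F)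
    exact ⟨y, hym, h₁ ⟨hym, hyU.1, hyC.1⟩, h₂ ⟨hym, hyU.2, hyC.2⟩⟩
  obtain ⟨ξ, hξ⟩ := QuasiSober.sober hirr hmS.1
  have hξm : ξ ∈ m := hξ ▸ subset_closure rfl
  refine ⟨ξ, mem_univ ξ, ?_⟩
  show (F : Filter Y) ≤ @nhds Y (generateFrom (patchGen Y)) ξ
  rw [nhds_generateFrom]
  refine le_iInf₂ fun s hs => ?_
  rw [Filter.le_principal_iff]
  obtain ⟨hξs, hgen | ⟨U, hUo, hUc, hsU⟩⟩ := hs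
  · -- s is a quasi-compact open
    by_contra hsF
    have hscF : sᶜ ∈ F := Ultrafilter.compl_mem_iff_notMem.mpr hsF
    have hmem : m ∩ sᶜ ∈ S := by
      refine ⟨hmS.1.inter (isClosed_compl_iff.mpr hgen.1), fun U hUo hUc hUF C hCc hCF => ?_⟩
      obtain ⟨y, hym, hyU, hyC, hys⟩ := hmS.2 U hUo hUc hUF (C ∩ sᶜ)
        (hCc.inter (isClosed_compl_iff.mpr hgen.1)) (Filter.inter_mem hCF hscF)
      exact ⟨y, ⟨hym, hys⟩, hyU, hyC⟩
    exact ((hmin.2 hmem inter_subset_left) hξm).2 hξs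
  · -- s = Uᶜ with U quasi-compact open
    subst hsU
    by_contra hsF
    have hUF : U ∈ F := (F.mem_or_compl_mem U).resolve_right hsF
    obtain ⟨y, hym, hyU, -⟩ := hmS.2 U hUo hUc hUF univ isClosed_univ Filter.univ_mem
    have : y ∈ closure ({ξ} : Set Y) := hξ.symm ▸ hym
    obtain ⟨w2, hw2U, hw2ξ⟩ := mem_closure_iff.mp this U hUo hyU
    rw [mem_singleton_iff] at hw2ξ
    exact hξs (hw2ξ ▸ hw2U)

lemma patch_continuous {Y Z : Type*} [TopologicalSpace Y] [TopologicalSpace Z] {g : Y → Z}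
    (hg : Continuous g) (hqc : ∀ U : Set Z, IsOpen U → IsCompact U → IsCompact (g ⁻¹' U)) :
    Continuous[patchTop Y, patchTop Z] g := by
  show Continuous[patchTop Y, generateFrom (patchGen Z)] g
  rw [continuous_generateFrom_iff]
  rintro s (⟨hso, hsc⟩ | ⟨U, hUo, hUc, rfl⟩)
  · exact patch_basic (Or.inl ⟨hso.preimage hg, hqc _ hso hsc⟩)
  · rw [preimage_compl]
    exact patch_basic (Or.inr ⟨_, hUo.preimage hg, hqc _ hUo hUc, rfl⟩)

end Patch

/-- The key compactness argument, stated for abstract topologies (which will be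
instantiated with the patch topologies): in a codirected system of compact Hausdorff
spaces, given a compatible family of closed sets `D j` admitting points over `x` in each
`D m`, `m ≥ i`, there is a thread through the `D j` (for `j ≥ i`) lying over `x`. -/
lemma aux_thread {ι : Type*} [Preorder ι] [IsDirected ι (· ≤ ·)] [Nonempty ι]
    {X : ι → Type*} [∀ j, TopologicalSpace (X j)]
    [∀ j, CompactSpace (X j)] [∀ j, T2Space (X j)]
    (f : ∀ ⦃a b : ι⦄, a ≤ b → X b → X a)
    (hfc : ∀ ⦃a b : ι⦄ (h : a ≤ b), Continuous (f h))
    (hcomp : ∀ ⦃a b c : ι⦄ (hab : a ≤ b) (hbc : b ≤ c) (y : X c),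
      f hab (f hbc y) = f (hab.trans hbc) y)
    (i : ι) (x : X i) (D : ∀ j, Set (X j)) (hD : ∀ j, IsClosed (D j))
    (hmapD : ∀ ⦃a b : ι⦄ (h : a ≤ b), f h '' D b ⊆ D a)
    (hwit : ∀ m : ι, ∀ him : i ≤ m, ∃ y ∈ D m, f him y = x)
    (z₀ : ∀ j, X j) :
    ∃ u : ∀ j, X j, (∀ ⦃a b : ι⦄ (h : a ≤ b), f h (u b) = u a) ∧
      ∀ j, ∀ hij : i ≤ j, u j ∈ D j ∧ f hij (u j) = x := by
  classical
  set J := ({p : ι × ι // p.1 ≤ p.2} ⊕ {j : ι // i ≤ j}) with hJ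
  set T : J → Set (∀ j, X j) := fun a =>
    Sum.elim (fun p : {p : ι × ι // p.1 ≤ p.2} => {u : ∀ j, X j | f p.2 (u p.1.2) = u p.1.1})
      (fun j : {j : ι // i ≤ j} => {u : ∀ j, X j | u j.1 ∈ D j.1 ∧ f j.2 (u j.1) = x}) a
    with hT
  have hTclosed : ∀ a : J, IsClosed (T a) := by
    rintro (⟨⟨a, b⟩, hab⟩ | ⟨j, hij⟩)
    · exact isClosed_eq ((hfc hab).comp (continuous_apply b)) (continuous_apply a)
    · exact ((hD j).preimage (continuous_apply j)).inter
        (isClosed_eq ((hfc hij).comp (continuous_apply j)) continuous_const)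
  have key : ((univ : Set (∀ j, X j)) ∩ ⋂ a : J, T a).Nonempty := by
    refine isCompact_univ.inter_iInter_nonempty T hTclosed ?_
    intro v
    -- gather the indices occurring in `v`
    set g : J → Finset ι := fun a =>
      Sum.elim (fun p : {p : ι × ι // p.1 ≤ p.2} => {p.1.1, p.1.2})
        (fun j : {j : ι // i ≤ j} => {j.1}) a with hg
    obtain ⟨m, hm⟩ := (insert i (v.biUnion g)).exists_le
    have him : i ≤ m := hm i (Finset.mem_insert_self i _)
    obtain ⟨y, hyD, hyx⟩ := hwit m him
    refine ⟨fun j => if h : j ≤ m then f h y else z₀ j, mem_univ _, ?_⟩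
    rw [mem_iInter₂]
    rintro (⟨⟨a, b⟩, hab⟩ | ⟨j, hij⟩) ha
    · have hbm : b ≤ m := by
        refine hm b (Finset.mem_insert_of_mem (Finset.mem_biUnion.mpr ⟨_, ha, ?_⟩))
        simp [hg]
      have ham : a ≤ m := hab.trans hbm
      show f hab (if h : b ≤ m then f h y else z₀ b) = if h : a ≤ m then f h y else z₀ a
      rw [dif_pos hbm, dif_pos ham]
      exact hcomp hab hbm y
    · have hjm : j ≤ m := by
        refine hm j (Finset.mem_insert_of_mem (Finset.mem_biUnion.mpr ⟨_, ha, ?_⟩))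
        simp [hg]
      show (if h : j ≤ m then f h y else z₀ j) ∈ D j ∧
        f hij (if h : j ≤ m then f h y else z₀ j) = x
      rw [dif_pos hjm]
      exact ⟨hmapD hjm ⟨y, hyD, rfl⟩, (hcomp hij hjm y).trans hyx⟩
  obtain ⟨u, -, hu⟩ := key
  refine ⟨u, fun a b h => ?_, fun j hij => ?_⟩
  · exact mem_iInter.mp hu (Sum.inl ⟨(a, b), h⟩)
  · exact mem_iInter.mp hu (Sum.inr ⟨j, hij⟩)

/-- Let `{Xᵢ}` be a cofiltered (codirected) system of spectral spaces with quasi-compact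
transition maps `f h : X j → X i` for `i ≤ j`, and let `X = lim Xᵢ` be the inverse limit
with projections `πᵢ`. If all transition maps are closed, then each projection is closed. -/
theorem stmt_4 {ι : Type*} [Preorder ι] [IsDirected ι (· ≤ ·)] [Nonempty ι]
    (X : ι → Type*) [∀ i, TopologicalSpace (X i)]
    [∀ i, CompactSpace (X i)] [∀ i, QuasiSober (X i)] [∀ i, T0Space (X i)]
    [∀ i, QuasiSeparatedSpace (X i)]
    (hbase : ∀ i (x : X i) (U : Set (X i)), IsOpen U → x ∈ U →
      ∃ V : Set (X i), IsOpen V ∧ IsCompact V ∧ x ∈ V ∧ V ⊆ U)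
    (f : ∀ ⦃i j : ι⦄, i ≤ j → X j → X i)
    (hcont : ∀ ⦃i j : ι⦄ (h : i ≤ j), Continuous (f h))
    (hid : ∀ (i : ι) (x : X i), f (le_refl i) x = x)
    (hcomp : ∀ ⦃i j k : ι⦄ (hij : i ≤ j) (hjk : j ≤ k) (x : X k),
      f hij (f hjk x) = f (hij.trans hjk) x)
    (hqc : ∀ ⦃i j : ι⦄ (h : i ≤ j) (U : Set (X i)), IsOpen U → IsCompact U →
      IsCompact (f h ⁻¹' U))
    (hclosed : ∀ ⦃i j : ι⦄ (h : i ≤ j), IsClosedMap (f h)) (i : ι) :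
    IsClosedMap (fun u : {u : ∀ j, X j // ∀ ⦃j k : ι⦄ (h : j ≤ k), f h (u k) = u j} =>
      u.1 i) := by
  classical
  intro Z hZ
  rcases Z.eq_empty_or_nonempty with rfl | ⟨z₀, hz₀⟩
  · simpa using isClosed_empty
  refine isClosed_of_closure_subset fun x hx => ?_
  -- the family of closures of the images of Z
  set D : ∀ m, Set (X m) := fun m =>
    closure ((fun u : {u : ∀ j, X j // ∀ ⦃j k : ι⦄ (h : j ≤ k), f h (u k) = u j} => u.1 m) '' Z)
    with hD
  have hDclosed : ∀ m, IsClosed (D m) := fun m => isClosed_closure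
  have hmapD : ∀ ⦃a b : ι⦄ (h : a ≤ b), f h '' D b ⊆ D a := by
    intro a b h
    refine (image_closure_subset_closure_image (hcont h)).trans (closure_mono ?_)
    rintro _ ⟨_, ⟨z, hzZ, rfl⟩, rfl⟩
    exact ⟨z, hzZ, (z.2 h).symm⟩
  -- points of `D m` over `x`, using closedness of the transition maps
  have hwit : ∀ m : ι, ∀ him : i ≤ m, ∃ y ∈ D m, f him y = x := by
    intro m him
    have h1 : (fun u : {u : ∀ j, X j // ∀ ⦃j k : ι⦄ (h : j ≤ k), f h (u k) = u j} => u.1 i) '' Z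
        ⊆ f him '' D m := by
      rintro _ ⟨z, hzZ, rfl⟩
      exact ⟨z.1 m, subset_closure ⟨z, hzZ, rfl⟩, z.2 him⟩
    have h2 : IsClosed (f him '' D m) := hclosed him _ (hDclosed m)
    obtain ⟨y, hy1, hy2⟩ := (h2.closure_subset_iff.mpr h1) hx
    exact ⟨y, hy1, hy2⟩
  -- apply the patch-topology compactness argument
  obtain ⟨u, hucompat, huD⟩ :=
    @aux_thread ι _ _ _ X (fun j => patchTop (X j))
      (fun j => patch_compact) (fun j => patch_t2 (hbase j)) f
      (fun a b h => patch_continuous (hcont h) (fun U hUo hUc => hqc h U hUo hUc))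
      hcomp i x D
      (fun m => isClosed_patch_of_isClosed (hbase m) (hDclosed m))
      hmapD hwit z₀.1
  have hui : u i = x := by
    have h1 := hucompat (le_refl i)
    have h2 := (huD i (le_refl i)).2
    rw [h1] at h2
    exact h2
  -- the thread `u` lies in `Z`
  have hZmem : (⟨u, hucompat⟩ : {u : ∀ j, X j // ∀ ⦃j k : ι⦄ (h : j ≤ k), f h (u k) = u j}) ∈ Z := by
    by_contra hc
    have hopen := hZ.isOpen_compl
    rw [isOpen_induced_iff] at hopen
    obtain ⟨O, hOopen, hOeq⟩ := hopen
    have huO : u ∈ O := by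
      have : (⟨u, hucompat⟩ : {u : ∀ j, X j // ∀ ⦃j k : ι⦄ (h : j ≤ k), f h (u k) = u j})
          ∈ Subtype.val ⁻¹' O := by rw [hOeq]; exact hc
      exact this
    obtain ⟨I, V, hIV, hpi⟩ := (isOpen_pi_iff.mp hOopen) u huO
    obtain ⟨m, hm⟩ := (insert i I).exists_le
    have him : i ≤ m := hm i (Finset.mem_insert_self i I)
    have hWopen : IsOpen (⋂ a : I, f (hm a (Finset.mem_insert_of_mem a.2)) ⁻¹' V a) :=
      isOpen_iInter_of_finite fun a => ((hIV a a.2).1).preimage (hcont _)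
    have humem : u m ∈ ⋂ a : I, f (hm a (Finset.mem_insert_of_mem a.2)) ⁻¹' V a := by
      refine mem_iInter.mpr fun a => ?_
      rw [mem_preimage, hucompat]
      exact (hIV a a.2).2
    have hclosD := (huD m him).1
    rw [hD] at hclosD
    obtain ⟨w, hwW, z, hzZ, hwz⟩ :=
      mem_closure_iff.mp hclosD _ hWopen humem
    have hwz' : z.1 m = w := hwz
    have hzO : z.1 ∈ (I : Set ι).pi V := by
      intro a ha
      have h1 : f (hm a (Finset.mem_insert_of_mem ha)) (z.1 m) = z.1 a := z.2 _
      rw [← h1, hwz']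
      exact mem_iInter.mp hwW ⟨a, ha⟩
    have : z ∈ Zᶜ := by
      rw [← hOeq]
      exact hpi hzO
    exact this hzZ
  exact ⟨⟨u, hucompat⟩, hZmem, hui⟩
end

section
/- Let {Xᵢ}_{i∈I} be a cofiltered system of nonempty spectral topological spaces with quasi-compact and surjective transition maps, and X = lim Xᵢ the inverse limit. Then each projection πᵢ : X → Xᵢ is surjective. -/
/-!
The constructible topology of a spectral space is compact Hausdorff, and spectral maps
(continuous, with quasi-compact preimages of quasi-compact opens) stay continuous for it.
Passing to constructible topologies does not change the limit set, and turns the system into an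
inverse system of nonempty compact Hausdorff spaces with surjective transition maps, whose limit
surjects onto every term by the finite intersection property.
-/

open Set TopologicalSpace Topology

section ConstructibleTopology

variable {X Y : Type*} [TopologicalSpace X] [TopologicalSpace Y]

lemma PrespectralSpace.of_exists_isOpen_isCompact_subset
    (h : ∀ (x : X) (U : Set X), IsOpen U → x ∈ U →
      ∃ V : Set X, IsOpen V ∧ IsCompact V ∧ x ∈ V ∧ V ⊆ U) :
    PrespectralSpace X :=
  ⟨isTopologicalBasis_of_isOpen_of_nhds (fun _ hU ↦ hU.1) fun x U hxU hU ↦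
    let ⟨V, hVo, hVc, hxV, hVU⟩ := h x U hU hxU
    ⟨V, ⟨hVo, hVc⟩, hxV, hVU⟩⟩

lemma compactSpace_constructibleTopology [CompactSpace X] [QuasiSober X] [PrespectralSpace X]
    [QuasiSeparatedSpace X] : @CompactSpace X (constructibleTopology X) :=
  @Function.Surjective.compactSpace _ _ _ (constructibleTopology X) _
    (WithTopology.continuous_ofTopology _) _ (WithTopology.ofTopology_surjective _)

lemma t2Space_constructibleTopology [T0Space X] [PrespectralSpace X] :
    @T2Space X (constructibleTopology X) := by
  have separate : ∀ ⦃x y : X⦄ (U : Set X), IsOpen U → x ∈ U → y ∉ U → ∃ V : Set X,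
      IsOpen[constructibleTopology X] V ∧ IsOpen[constructibleTopology X] Vᶜ ∧ x ∈ V ∧ y ∈ Vᶜ := by
    intro x y U hU hxU hyU
    obtain ⟨V, ⟨hVo, hVc⟩, hxV, hVU⟩ :=
      PrespectralSpace.isTopologicalBasis.exists_subset_of_mem_open hxU hU
    exact ⟨V, hVc.isOpen_constructibleTopology_of_isOpen hVo,
      (compl_compl V ▸ hVc).isOpen_constructibleTopology_of_isClosed hVo.isClosed_compl,
      hxV, fun hyV ↦ hyU (hVU hyV)⟩
  refine @T2Space.mk X (constructibleTopology X) fun x y hxy ↦ ?_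
  obtain ⟨U, hU, ⟨hxU, hyU⟩ | ⟨hyU, hxU⟩⟩ := exists_isOpen_xor_mem hxy
  · obtain ⟨V, hV, hVc, hxV, hyV⟩ := separate U hU hxU hyU
    exact ⟨V, Vᶜ, hV, hVc, hxV, hyV, disjoint_compl_right⟩
  · obtain ⟨V, hV, hVc, hyV, hxV⟩ := separate U hU hyU hxU
    exact ⟨Vᶜ, V, hVc, hV, hxV, hyV, disjoint_compl_left⟩

lemma IsSpectralMap.continuous_constructibleTopology {f : X → Y} (hf : IsSpectralMap f) :
    Continuous[constructibleTopology X, constructibleTopology Y] f := by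
  refine continuous_generateFrom_iff.2 ?_
  rintro s (⟨hso, hsc⟩ | ⟨hsc, hsc'⟩)
  · exact (hf.isCompact_preimage_of_isOpen hso hsc).isOpen_constructibleTopology_of_isOpen
      (hso.preimage hf.continuous)
  · refine IsCompact.isOpen_constructibleTopology_of_isClosed ?_ (hsc.preimage hf.continuous)
    exact hf.isCompact_preimage_of_isOpen hsc.isOpen_compl hsc'

end ConstructibleTopology

/-- The families compatible up to level `k` and passing through `x` form a directed system of
nonempty closed sets in the compact product, so they have a common point. -/
theorem exists_compatible_family_eq_of_compactSpace_of_t2Space {ι : Type*} [Preorder ι]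
    [IsDirected ι (· ≤ ·)] {Y : ι → Type*} [tY : ∀ j, TopologicalSpace (Y j)] [∀ j, Nonempty (Y j)]
    [compactY : ∀ j, CompactSpace (Y j)] [t2Y : ∀ j, T2Space (Y j)] (f : ∀ ⦃i j : ι⦄, i ≤ j → Y j → Y i)
    (hcont : ∀ ⦃i j : ι⦄ (h : i ≤ j), Continuous (f h))
    (hcomp : ∀ ⦃i j k : ι⦄ (hij : i ≤ j) (hjk : j ≤ k) (x : Y k),
      f hij (f hjk x) = f (hij.trans hjk) x)
    (hsurj : ∀ ⦃i j : ι⦄ (h : i ≤ j), Function.Surjective (f h)) (i : ι) (x : Y i) :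
    ∃ u : ∀ j, Y j, (∀ ⦃j k : ι⦄ (h : j ≤ k), f h (u k) = u j) ∧ u i = x := by
  classical
  let S : ι → Set (∀ j, Y j) := fun k ↦
    {u | u i = x} ∩ ⋂ (j) (j') (h : j ≤ j') (_ : j' ≤ k), {u | f h (u j') = u j}
  have mem_S {k u} : u ∈ S k ↔ u i = x ∧ ∀ ⦃j j'⦄ (h : j ≤ j'), j' ≤ k → f h (u j') = u j := by
    simp only [S, mem_inter_iff, mem_iInter, mem_ofPred_eq]
  have hS_anti : Antitone S := fun k k' hk u hu ↦
    mem_S.2 ⟨(mem_S.1 hu).1, fun _ _ h hj' ↦ (mem_S.1 hu).2 h (hj'.trans hk)⟩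
  have hS_closed (k : ι) : IsClosed (S k) :=
    (isClosed_eq (continuous_apply i) continuous_const).inter <|
      isClosed_iInter fun j ↦ isClosed_iInter fun j' ↦ isClosed_iInter fun h ↦
        isClosed_iInter fun _ ↦ isClosed_eq ((hcont h).comp (continuous_apply j'))
          (continuous_apply j)
  have hS_nonempty (k : ι) : (S k).Nonempty := by
    obtain ⟨m, him, hkm⟩ := exists_ge_ge i k
    obtain ⟨y, rfl⟩ := hsurj him x
    refine ⟨fun j ↦ if h : j ≤ m then f h y else Classical.arbitrary _, mem_S.2 ⟨?_, ?_⟩⟩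
    · simp only [dif_pos him]
    · intro j j' h hj'
      simp only [dif_pos (hj'.trans hkm), dif_pos ((h.trans hj').trans hkm), hcomp]
  have : Nonempty ι := ⟨i⟩
  obtain ⟨u, hu⟩ := IsCompact.nonempty_iInter_of_directed_nonempty_isCompact_isClosed S
    hS_anti.directed_ge hS_nonempty (fun k ↦ (hS_closed k).isCompact) hS_closed
  rw [mem_iInter] at hu
  exact ⟨u, fun j k h ↦ (mem_S.1 (hu k)).2 h le_rfl, (mem_S.1 (hu i)).1⟩

theorem stmt_5_general {ι : Type*} [Preorder ι] [IsDirected ι (· ≤ ·)]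
    (X : ι → Type*) [∀ i, TopologicalSpace (X i)] [∀ i, Nonempty (X i)]
    [∀ i, CompactSpace (X i)] [∀ i, QuasiSober (X i)] [∀ i, T0Space (X i)]
    [∀ i, QuasiSeparatedSpace (X i)]
    (hbase : ∀ i (x : X i) (U : Set (X i)), IsOpen U → x ∈ U →
      ∃ V : Set (X i), IsOpen V ∧ IsCompact V ∧ x ∈ V ∧ V ⊆ U)
    (f : ∀ ⦃i j : ι⦄, i ≤ j → X j → X i)
    (hcont : ∀ ⦃i j : ι⦄ (h : i ≤ j), Continuous (f h))
    (hcomp : ∀ ⦃i j k : ι⦄ (hij : i ≤ j) (hjk : j ≤ k) (x : X k),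
      f hij (f hjk x) = f (hij.trans hjk) x)
    (hqc : ∀ ⦃i j : ι⦄ (h : i ≤ j) (U : Set (X i)), IsOpen U → IsCompact U →
      IsCompact (f h ⁻¹' U))
    (hsurj : ∀ ⦃i j : ι⦄ (h : i ≤ j), Function.Surjective (f h)) (i : ι) :
    Function.Surjective (fun u : {u : ∀ j, X j // ∀ ⦃j k : ι⦄ (h : j ≤ k), f h (u k) = u j} =>
      u.1 i) := by
  have (j : ι) : PrespectralSpace (X j) := .of_exists_isOpen_isCompact_subset (hbase j)
  intro x
  obtain ⟨u, hu, rfl⟩ := exists_compatible_family_eq_of_compactSpace_of_t2Space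
    (Y := X) (tY := fun j ↦ constructibleTopology (X j))
    (compactY := fun _ ↦ compactSpace_constructibleTopology)
    (t2Y := fun _ ↦ t2Space_constructibleTopology) f
    (fun _ _ h ↦ IsSpectralMap.continuous_constructibleTopology ⟨hcont h, hqc h⟩) hcomp hsurj i x
  exact ⟨⟨u, hu⟩, rfl⟩

/-- Let `{Xᵢ}` be a cofiltered system of nonempty spectral spaces with quasi-compact and
surjective transition maps, and `X = lim Xᵢ` the inverse limit. Then each projection
`πᵢ : X → Xᵢ` is surjective. -/
theorem stmt_5 {ι : Type*} [Preorder ι] [IsDirected ι (· ≤ ·)] [Nonempty ι]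
    (X : ι → Type*) [∀ i, TopologicalSpace (X i)] [∀ i, Nonempty (X i)]
    [∀ i, CompactSpace (X i)] [∀ i, QuasiSober (X i)] [∀ i, T0Space (X i)]
    [∀ i, QuasiSeparatedSpace (X i)]
    (hbase : ∀ i (x : X i) (U : Set (X i)), IsOpen U → x ∈ U →
      ∃ V : Set (X i), IsOpen V ∧ IsCompact V ∧ x ∈ V ∧ V ⊆ U)
    (f : ∀ ⦃i j : ι⦄, i ≤ j → X j → X i)
    (hcont : ∀ ⦃i j : ι⦄ (h : i ≤ j), Continuous (f h))
    (hid : ∀ (i : ι) (x : X i), f (le_refl i) x = x)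
    (hcomp : ∀ ⦃i j k : ι⦄ (hij : i ≤ j) (hjk : j ≤ k) (x : X k),
      f hij (f hjk x) = f (hij.trans hjk) x)
    (hqc : ∀ ⦃i j : ι⦄ (h : i ≤ j) (U : Set (X i)), IsOpen U → IsCompact U →
      IsCompact (f h ⁻¹' U))
    (hsurj : ∀ ⦃i j : ι⦄ (h : i ≤ j), Function.Surjective (f h)) (i : ι) :
    Function.Surjective (fun u : {u : ∀ j, X j // ∀ ⦃j k : ι⦄ (h : j ≤ k), f h (u k) = u j} =>
      u.1 i) :=
  stmt_5_general X hbase f hcont hcomp hqc hsurj i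
end

section
/- Let {Xᵢ}_{i∈I} be a cofiltered system of topological spaces and X = lim Xᵢ its inverse limit. Then the Krull dimension of X is at most the supremum over i of the Krull dimensions of the Xᵢ. -/
/-!
A strict inclusion `T < T'` of irreducible closed subsets of the inverse limit is witnessed by a
point of `T' \ T`, and since the topology is generated by the projections, that point is
already separated from `T` after projecting to some `Xᵢ`, hence to every `Xⱼ` with `i ≤ j`.
Directedness gives one index `k` beyond the finitely many steps of a chain, and taking closures
of images in `Xₖ` turns the chain into a chain of irreducible closed subsets of `Xₖ` of the same
length.
-/

open Set Filter Topology TopologicalSpace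

namespace TopologicalSpace.IrreducibleCloseds

variable {α β : Type*} [TopologicalSpace α] [TopologicalSpace β]

theorem map_lt_map_of_mem_of_notMem_closure {f : β → α} (hf : Continuous f)
    {s t : IrreducibleCloseds β} (hst : s ≤ t) {x : β} (hx : x ∈ t)
    (hfx : f x ∉ closure (f '' s)) : map f hf s < map f hf t :=
  (map_mono hf hst).lt_of_ne fun h =>
    hfx <| by rw [← coe_map f hf, h]; exact subset_closure (mem_image_of_mem f hx)

end TopologicalSpace.IrreducibleCloseds

theorem topologicalKrullDim_le_iSup_of_forall_mem_closure_image {Y : Type*} [TopologicalSpace Y]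
    {ι : Type*} [Preorder ι] [IsDirected ι (· ≤ ·)] [Nonempty ι]
    {X : ι → Type*} [∀ i, TopologicalSpace (X i)] (π : ∀ i, Y → X i)
    (hπ : ∀ i, Continuous (π i))
    (hmono : ∀ ⦃i j : ι⦄, i ≤ j → ∀ (T : Set Y) (x : Y),
      π j x ∈ closure (π j '' T) → π i x ∈ closure (π i '' T))
    (hclosure : ∀ (T : Set Y) (x : Y),
      (∀ i, π i x ∈ closure (π i '' T)) → x ∈ closure T) :
    topologicalKrullDim Y ≤ ⨆ i, topologicalKrullDim (X i) := by
  classical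
  refine iSup_le fun p => ?_
  have hstep : ∀ m : Fin p.length,
      ∃ x ∈ p m.succ, ∃ i, π i x ∉ closure (π i '' p m.castSucc) := by
    intro m
    obtain ⟨x, hx, hxp⟩ := SetLike.exists_of_lt (p.strictMono m.castSucc_lt_succ)
    refine ⟨x, hx, ?_⟩
    by_contra! h
    exact hxp <| (p m.castSucc).isClosed.closure_subset (hclosure _ x h)
  choose x hx i hi using hstep
  obtain ⟨k, hk⟩ := (Finset.univ.image i).exists_le
  have hik : ∀ m, i m ≤ k := fun m => hk _ (Finset.mem_image_of_mem i (Finset.mem_univ m))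
  let q : LTSeries (IrreducibleCloseds (X k)) :=
    ⟨p.length, IrreducibleCloseds.map (π k) (hπ k) ∘ p, fun m =>
      IrreducibleCloseds.map_lt_map_of_mem_of_notMem_closure (hπ k)
        (p.strictMono m.castSucc_lt_succ).le (hx m) fun h => hi m (hmono (hik m) _ _ h)⟩
  calc (p.length : WithBot ℕ∞) = q.length := rfl
    _ ≤ topologicalKrullDim (X k) := Order.LTSeries.length_le_krullDim q
    _ ≤ ⨆ i, topologicalKrullDim (X i) := le_iSup (fun i => topologicalKrullDim (X i)) k

section

variable {ι : Type*} [Preorder ι] {X : ι → Type*} [∀ i, TopologicalSpace (X i)]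

abbrev InverseLimit (f : ∀ ⦃i j : ι⦄, i ≤ j → X j → X i) : Type _ :=
  {u : ∀ j, X j // ∀ ⦃j k : ι⦄ (h : j ≤ k), f h (u k) = u j}

variable {f : ∀ ⦃i j : ι⦄, i ≤ j → X j → X i}

namespace InverseLimit

def proj (i : ι) (u : InverseLimit f) : X i := u.1 i

theorem continuous_proj (i : ι) : Continuous (proj (f := f) i) :=
  (continuous_apply i).comp continuous_subtype_val

theorem proj_mem_closure_image_of_le (hcont : ∀ ⦃i j : ι⦄ (h : i ≤ j), Continuous (f h))
    {i j : ι} (hij : i ≤ j) (T : Set (InverseLimit f)) (x : InverseLimit f)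
    (hx : proj j x ∈ closure (proj j '' T)) : proj i x ∈ closure (proj i '' T) := by
  have himage : proj i '' T = f hij '' (proj j '' T) := by
    rw [image_image]
    exact image_congr fun u _ => (u.2 hij).symm
  rw [himage, proj, ← x.2 hij]
  exact mem_closure_image (hcont hij).continuousAt hx

theorem mem_closure_of_forall_proj_mem_closure [IsDirected ι (· ≤ ·)] [Nonempty ι]
    (hcont : ∀ ⦃i j : ι⦄ (h : i ≤ j), Continuous (f h)) (T : Set (InverseLimit f))
    (x : InverseLimit f) (hx : ∀ i, proj i x ∈ closure (proj i '' T)) : x ∈ closure T := by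
  rw [mem_closure_iff_nhds]
  intro V hV
  obtain ⟨W, hW, hWV⟩ := (mem_nhds_subtype _ _ _).mp hV
  rw [nhds_pi, Filter.mem_pi] at hW
  obtain ⟨I, hI, t, ht, hIW⟩ := hW
  obtain ⟨k, hk⟩ := hI.exists_le
  have := hI.to_subtype
  have hU : (⋂ j : I, f (hk j j.2) ⁻¹' t j) ∈ 𝓝 (proj k x) :=
    iInter_mem.mpr fun j => (hcont _).continuousAt.preimage_mem_nhds (by rw [proj, x.2]; exact ht j)
  obtain ⟨_, hyU, y, hyT, rfl⟩ := mem_closure_iff_nhds.mp (hx k) _ hU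
  refine ⟨y, hWV (hIW fun j hj => ?_), hyT⟩
  have := mem_iInter.mp hyU ⟨j, hj⟩
  rwa [mem_preimage, proj, y.2] at this

end InverseLimit

end

theorem stmt_6_general {ι : Type*} [Preorder ι] [IsDirected ι (· ≤ ·)] [Nonempty ι]
    (X : ι → Type*) [∀ i, TopologicalSpace (X i)]
    (f : ∀ ⦃i j : ι⦄, i ≤ j → X j → X i)
    (hcont : ∀ ⦃i j : ι⦄ (h : i ≤ j), Continuous (f h)) :
    topologicalKrullDim {u : ∀ j, X j // ∀ ⦃j k : ι⦄ (h : j ≤ k), f h (u k) = u j} ≤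
      ⨆ i, topologicalKrullDim (X i) :=
  topologicalKrullDim_le_iSup_of_forall_mem_closure_image (InverseLimit.proj (f := f))
    InverseLimit.continuous_proj
    (fun _ _ hij => InverseLimit.proj_mem_closure_image_of_le hcont hij)
    (InverseLimit.mem_closure_of_forall_proj_mem_closure hcont)

/-- Let `{Xᵢ}` be a cofiltered system of topological spaces and `X = lim Xᵢ` its inverse
limit. Then the Krull dimension of `X` is at most the supremum of the Krull dimensions of
the `Xᵢ`. -/
theorem stmt_6 {ι : Type*} [Preorder ι] [IsDirected ι (· ≤ ·)] [Nonempty ι]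
    (X : ι → Type*) [∀ i, TopologicalSpace (X i)]
    (f : ∀ ⦃i j : ι⦄, i ≤ j → X j → X i)
    (hcont : ∀ ⦃i j : ι⦄ (h : i ≤ j), Continuous (f h))
    (hid : ∀ (i : ι) (x : X i), f (le_refl i) x = x)
    (hcomp : ∀ ⦃i j k : ι⦄ (hij : i ≤ j) (hjk : j ≤ k) (x : X k),
      f hij (f hjk x) = f (hij.trans hjk) x) :
    topologicalKrullDim {u : ∀ j, X j // ∀ ⦃j k : ι⦄ (h : j ≤ k), f h (u k) = u j} ≤
      ⨆ i, topologicalKrullDim (X i) :=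
  stmt_6_general X f hcont
end

section
/- Let Q be a fine saturated monoid (finitely generated, integral, saturated) and Q → P a morphism of fine saturated monoids inducing an isomorphism Q^gp ≅ P^gp. Then Q ⊆ P inside the common groupification, and there exist elements f₁, ..., fₙ, s ∈ Q such that P is generated by the elements f₁/s, ..., fₙ/s in Q^gp; consequently, setting I ⊆ Q the ideal generated by f₁,...,fₙ,s, one has P = ⋃_{n ≥ 0} (Iⁿ : sⁿ), i.e., P equals the union over n of the sets {x ∈ Q^gp : sⁿ·x ∈ Iⁿ}. -/
/-!
Since `Q` generates `G` as a group, every element of `G` is a fraction `a / b` with `a, b ∈ Q`,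
so the finitely many generators `pᵢ` of `P` have a common denominator `s ∈ Q`: `fᵢ := pᵢ s ∈ Q`.
Then `P` is generated by the `fᵢ / s`, and a product of `m` of them, times an element of
`Q ⊆ P`, is exactly an element `x` with `sᵐ x ∈ Iᵐ`.
-/

namespace Submonoid

variable {G : Type*} [CommGroup G]

theorem exists_eq_mul_inv_of_closure_eq_top {Q : Submonoid G}
    (hQ : Subgroup.closure (Q : Set G) = ⊤) (x : G) : ∃ a ∈ Q, ∃ b ∈ Q, x = a * b⁻¹ := by
  have hx : x ∈ Subgroup.closure (Q : Set G) := hQ ▸ Subgroup.mem_top x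
  induction hx using Subgroup.closure_induction with
  | mem y hy => exact ⟨y, hy, 1, Q.one_mem, by simp⟩
  | one => exact ⟨1, Q.one_mem, 1, Q.one_mem, by simp⟩
  | mul y z _ _ hy hz =>
    obtain ⟨a, ha, b, hb, rfl⟩ := hy
    obtain ⟨c, hc, d, hd, rfl⟩ := hz
    exact ⟨a * c, Q.mul_mem ha hc, b * d, Q.mul_mem hb hd, by rw [mul_inv, mul_mul_mul_comm]⟩
  | inv y _ hy =>
    obtain ⟨a, ha, b, hb, rfl⟩ := hy
    exact ⟨b, hb, a, ha, by group⟩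

theorem exists_common_denominator {Q : Submonoid G} (hQ : Subgroup.closure (Q : Set G) = ⊤)
    (T : Finset G) : ∃ s ∈ Q, ∀ x ∈ T, x * s ∈ Q := by
  classical
  induction T using Finset.induction_on with
  | empty => exact ⟨1, Q.one_mem, by simp⟩
  | insert y T _ ih =>
    obtain ⟨s, hs, hTs⟩ := ih
    obtain ⟨a, ha, b, hb, rfl⟩ := exists_eq_mul_inv_of_closure_eq_top hQ y
    refine ⟨s * b, Q.mul_mem hs hb, fun x hx => ?_⟩
    rcases Finset.mem_insert.1 hx with rfl | hx
    · rw [mul_comm s b, ← mul_assoc, inv_mul_cancel_right]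
      exact Q.mul_mem ha hs
    · rw [← mul_assoc]
      exact Q.mul_mem (hTs x hx) hb

theorem mem_iff_exists_pow_mul_eq_prod_mul {Q P : Submonoid G} (hQP : Q ≤ P) {F : Set G} {s : G}
    (hP : P = closure ((· * s⁻¹) '' F)) (x : G) :
    x ∈ P ↔ ∃ (m : ℕ) (c : Fin m → G),
      (∀ j, c j ∈ insert s F) ∧ ∃ q ∈ Q, s ^ m * x = (∏ j, c j) * q := by
  constructor
  · intro hx
    rw [hP] at hx
    obtain ⟨l, hl, rfl⟩ := exists_list_of_mem_closure hx
    refine ⟨l.length, fun j => l.get j * s, fun j => ?_, 1, Q.one_mem, ?_⟩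
    · obtain ⟨f, hf, hfl⟩ := hl _ (l.get_mem j)
      simp only [← hfl, inv_mul_cancel_right]
      exact Set.mem_insert_of_mem s hf
    · rw [Finset.prod_mul_distrib, Finset.prod_const, Finset.card_univ, Fintype.card_fin,
        ← List.prod_ofFn, List.ofFn_get, mul_one, mul_comm]
  · rintro ⟨m, c, hc, q, hq, hx⟩
    have hcP : ∀ j, c j * s⁻¹ ∈ P := fun j => by
      rcases hc j with h | hf
      · rw [h, mul_inv_cancel]
        exact P.one_mem
      · exact hP ▸ subset_closure ⟨c j, hf, rfl⟩
    have hx' : x = (∏ j, c j * s⁻¹) * q := by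
      rw [Finset.prod_mul_distrib, Finset.prod_const, Finset.card_univ, Fintype.card_fin,
        inv_pow, mul_right_comm, ← hx, mul_inv_cancel_comm]
    rw [hx']
    exact P.mul_mem (P.prod_mem fun j _ => hcP j) (hQP hq)

end Submonoid

theorem stmt_10_general {G : Type u} [CommGroup G] (Q P : Submonoid G) (hQP : Q ≤ P)
    (hgenQ : Subgroup.closure (Q : Set G) = ⊤)
    (hPfg : P.FG) :
    ∃ (n : ℕ) (fe : Fin n → G) (s : G), (∀ i, fe i ∈ Q) ∧ s ∈ Q ∧
      P = Submonoid.closure (Set.range fun i => fe i * s⁻¹) ∧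
      ∀ x : G, x ∈ P ↔ ∃ (m : ℕ) (c : Fin m → G),
        (∀ j, c j ∈ insert s (Set.range fe)) ∧
        ∃ q ∈ Q, s ^ m * x = (∏ j, c j) * q := by
  obtain ⟨T, rfl⟩ := hPfg
  obtain ⟨s, hs, hTs⟩ := Submonoid.exists_common_denominator hgenQ T
  have hgen : Submonoid.closure (T : Set G) =
      Submonoid.closure (Set.range fun i => T.toList.get i * s * s⁻¹) := by
    simp_rw [mul_inv_cancel_right, Set.range_list_get, Finset.mem_toList, Finset.setOfPred_mem]
  refine ⟨T.toList.length, fun i => T.toList.get i * s, s,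
    fun i => hTs _ (Finset.mem_toList.1 (List.get_mem _ i)), hs, hgen, ?_⟩
  exact Submonoid.mem_iff_exists_pow_mul_eq_prod_mul hQP (by rw [← Set.range_comp]; exact hgen)

/-- Let `Q ⊆ P` be fine saturated monoids inside a common groupification `G = Q^gp = P^gp`
(the inclusion `Q → P` induces an isomorphism on groupifications). Then there exist
`f₁, …, fₙ, s ∈ Q` such that `P` is generated by the elements `fᵢ/s` and, with `I ⊆ Q` the
ideal generated by `f₁, …, fₙ, s`, one has `P = ⋃ₙ (Iⁿ : sⁿ)`: an element `x ∈ G` lies in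
`P` iff for some `m`, `sᵐ·x` is a product of `m` of the generators times an element of `Q`. -/
theorem stmt_10 {G : Type u} [CommGroup G] (Q P : Submonoid G) (hQP : Q ≤ P)
    (hgenQ : Subgroup.closure (Q : Set G) = ⊤)
    (hQfg : Q.FG) (hPfg : P.FG)
    (hQsat : ∀ (x : G) (n : ℕ), 1 ≤ n → x ^ n ∈ Q → x ∈ Q)
    (hPsat : ∀ (x : G) (n : ℕ), 1 ≤ n → x ^ n ∈ P → x ∈ P) :
    ∃ (n : ℕ) (fe : Fin n → G) (s : G), (∀ i, fe i ∈ Q) ∧ s ∈ Q ∧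
      P = Submonoid.closure (Set.range fun i => fe i * s⁻¹) ∧
      ∀ x : G, x ∈ P ↔ ∃ (m : ℕ) (c : Fin m → G),
        (∀ j, c j ∈ insert s (Set.range fe)) ∧
        ∃ q ∈ Q, s ^ m * x = (∏ j, c j) * q :=
  stmt_10_general Q P hQP hgenQ hPfg
end

section
/- A finitely generated integral commutative monoid P is valuative (i.e., its image in P^gp satisfies: for all x ∈ P^gp, x ∈ P or x⁻¹ ∈ P) if and only if the quotient P/P^× is valuative; and for a fine saturated monoid P, P is valuative if and only if the rank of the finitely generated abelian group P^gp/P^× is at most 1. -/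
/-!
Everything reduces to the sharp quotient `Q = P/P^×` inside `H = G/P^×`: membership in `P` can be
read off in `Q` because `P^× ⊆ P`, and `Q` is again saturated when `P` is.

A sharp valuative `Q` is the positive cone of a total order on `H`. If `Q` is finitely generated,
the least nontrivial generator `a` is the least nontrivial element of `Q`, and by Dickson's lemma
the powers of `a` are cofinal in `Q` (otherwise `d a⁻ᴺ ∈ Q` for all `N`, and one of these would
divide a later one, forcing `a⁻¹ ∈ Q`). Dividing repeatedly by `a` then shows that `Q` consists of
the powers of `a`, so `H` is cyclic.

Conversely, if `H` has rank at most one, write `x = p / q` with `p, q ∈ Q` and take a relation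
`pᵐ qⁿ = 1`; then `(p / q)ⁿ = pᵐ⁺ⁿ` and `(q / p)ᵐ = qᵐ⁺ⁿ`, and with `m + n ≥ 0` saturation puts
`p / q` or its inverse in `Q`.
-/

namespace Submonoid

variable {H : Type*} [CommGroup H]

def IsValuative (Q : Submonoid H) : Prop := ∀ x : H, x ∈ Q ∨ x⁻¹ ∈ Q

def IsSharp (Q : Submonoid H) : Prop := ∀ x ∈ Q, x⁻¹ ∈ Q → x = 1

def IsSaturated (Q : Submonoid H) : Prop := ∀ (x : H) (n : ℕ), 1 ≤ n → x ^ n ∈ Q → x ∈ Q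

/-- Dickson's lemma: divisibility is a well-quasi-order on a finitely generated monoid. -/
theorem FG.exists_lt_eq_mul {M : Type*} [CommMonoid M] {Q : Submonoid M} (hQ : Q.FG)
    {f : ℕ → M} (hf : ∀ n, f n ∈ Q) : ∃ i j, i < j ∧ ∃ r ∈ Q, f j = f i * r := by
  obtain ⟨s, rfl⟩ := hQ
  choose e he using fun n ↦ mem_closure_finset'.1 (hf n)
  obtain ⟨i, j, hij, hle⟩ := wellQuasiOrdered_le e
  refine ⟨i, j, hij, ∏ t : s, t.1 ^ (e j t - e i t),
    prod_mem _ fun t _ ↦ pow_mem (subset_closure t.2) _, ?_⟩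
  rw [he j, he i, ← Finset.prod_mul_distrib]
  refine Finset.prod_congr rfl fun t _ ↦ ?_
  rw [← pow_add, Nat.add_sub_cancel' (hle t)]

variable {Q : Submonoid H}

theorem IsValuative.exists_forall_mul_inv_mem (hval : Q.IsValuative) {s : Finset H}
    (hs : s.Nonempty) : ∃ a ∈ s, ∀ t ∈ s, t * a⁻¹ ∈ Q := by
  let r : H → H → Prop := fun x y ↦ x * y⁻¹ ∈ Q
  have : IsTrans H r := ⟨fun x y z hxy hyz ↦ by simpa [r] using Q.mul_mem hxy hyz⟩
  have hdir : Directed r ((↑) : s → H) := fun x y ↦ by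
    rcases hval (x * (y : H)⁻¹) with hxy | hyx
    · exact ⟨y, hxy, by simp [r, Q.one_mem]⟩
    · exact ⟨x, by simp [r, Q.one_mem], by simpa [r] using hyx⟩
  have : Nonempty s := hs.to_subtype
  obtain ⟨a, ha⟩ := hdir.finset_le Finset.univ
  exact ⟨a, a.2, fun t ht ↦ ha ⟨t, ht⟩ (Finset.mem_univ _)⟩

theorem mul_inv_mem_closure_of_forall_mem {s : Set H} {a : H}
    (hs : ∀ t ∈ s, t ≠ 1 → t * a⁻¹ ∈ closure s) {q : H} (hq : q ∈ closure s) (hq1 : q ≠ 1) :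
    q * a⁻¹ ∈ closure s := by
  suffices q = 1 ∨ q * a⁻¹ ∈ closure s from this.resolve_left hq1
  clear hq1
  induction hq using closure_induction with
  | mem t ht => exact or_iff_not_imp_left.2 (hs t ht)
  | one => exact Or.inl rfl
  | mul x y _ hy ihx ihy =>
    rcases ihx with rfl | hx
    · simpa using ihy
    · exact Or.inr (by simpa [mul_right_comm] using mul_mem hx hy)

/-- The Archimedean property of the order defined by a finitely generated sharp valuative `Q`. -/
theorem exists_pow_mul_inv_mem (hfg : Q.FG) (hval : Q.IsValuative) (hsharp : Q.IsSharp)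
    {a : H} (ha : a ∈ Q) (ha1 : a ≠ 1) (d : H) : ∃ N : ℕ, a ^ N * d⁻¹ ∈ Q := by
  by_contra! h
  have hmem (N : ℕ) : d * (a ^ N)⁻¹ ∈ Q := by
    simpa [mul_comm] using (hval _).resolve_left (h N)
  obtain ⟨i, j, hij, r, hr, hrij⟩ := hfg.exists_lt_eq_mul hmem
  obtain ⟨k, rfl⟩ := Nat.exists_eq_add_of_lt hij
  have hr' : r = (a ^ (k + 1))⁻¹ := by
    rw [eq_inv_mul_of_mul_eq hrij.symm]
    group
  have hpow : a ^ (k + 1) = 1 := hsharp _ (pow_mem ha _) (hr' ▸ hr)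
  have hinv : a⁻¹ = a ^ k := inv_eq_of_mul_eq_one_right (by rwa [← pow_succ'])
  exact ha1 (hsharp a ha (hinv ▸ pow_mem ha k))

theorem exists_eq_pow_of_mem (hsharp : Q.IsSharp) {a : H} (hmin : ∀ q ∈ Q, q ≠ 1 → q * a⁻¹ ∈ Q)
    (harch : ∀ d : H, ∃ N : ℕ, a ^ N * d⁻¹ ∈ Q) {q : H} (hq : q ∈ Q) : ∃ k : ℕ, q = a ^ k := by
  obtain ⟨N, hN⟩ := harch q
  induction N generalizing q with
  | zero => exact ⟨0, by rw [pow_zero]; exact hsharp q hq (by simpa using hN)⟩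
  | succ N ih =>
    by_cases hq1 : q = 1
    · exact ⟨0, by rw [hq1, pow_zero]⟩
    obtain ⟨k, hk⟩ := ih (hmin q hq hq1) (by convert hN using 1; group)
    exact ⟨k + 1, by rw [pow_succ, ← hk, inv_mul_cancel_right]⟩

theorem IsValuative.exists_forall_mem_eq_pow (hval : Q.IsValuative) (hsharp : Q.IsSharp)
    (hfg : Q.FG) : ∃ a : H, ∀ q ∈ Q, ∃ k : ℕ, q = a ^ k := by
  classical
  obtain ⟨s, rfl⟩ := id hfg
  by_cases htriv : ∀ t ∈ s, t = 1
  · refine ⟨1, fun q hq ↦ ⟨0, ?_⟩⟩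
    have hbot : closure (s : Set H) ≤ ⊥ := closure_le.2 fun t ht ↦ htriv t ht
    simpa using hbot hq
  push Not at htriv
  obtain ⟨a, ha, hmin⟩ := hval.exists_forall_mul_inv_mem (s := s.filter (· ≠ 1))
    (by simpa [Finset.Nonempty] using htriv)
  rw [Finset.mem_filter] at ha
  have hmin' (q : H) (hq : q ∈ closure (s : Set H)) (hq1 : q ≠ 1) : q * a⁻¹ ∈ closure s :=
    mul_inv_mem_closure_of_forall_mem
      (fun t ht ht1 ↦ hmin t (Finset.mem_filter.2 ⟨ht, ht1⟩)) hq hq1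
  exact ⟨a, fun q hq ↦ exists_eq_pow_of_mem hsharp hmin'
    (exists_pow_mul_inv_mem hfg hval hsharp (subset_closure ha.1) ha.2) hq⟩

theorem IsValuative.isCyclic (hval : Q.IsValuative) (hsharp : Q.IsSharp) (hfg : Q.FG) :
    IsCyclic H := by
  obtain ⟨a, ha⟩ := hval.exists_forall_mem_eq_pow hsharp hfg
  refine ⟨a, fun x ↦ ?_⟩
  rcases hval x with hx | hx
  · obtain ⟨k, rfl⟩ := ha x hx
    exact ⟨k, zpow_natCast a k⟩
  · obtain ⟨k, hk⟩ := ha _ hx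
    exact ⟨-k, show a ^ (-(k : ℤ)) = x by rw [zpow_neg, zpow_natCast, ← hk, inv_inv]⟩

theorem IsSaturated.div_mem_or_inv_mem_of_zpow_mul_zpow_eq_one (hsat : Q.IsSaturated)
    {p q : H} (hp : p ∈ Q) (hq : q ∈ Q) {m n : ℤ} (hmn : m ≠ 0 ∨ n ≠ 0)
    (h : p ^ m * q ^ n = 1) : p / q ∈ Q ∨ (p / q)⁻¹ ∈ Q := by
  wlog hk : 0 ≤ m + n generalizing m n
  · exact this (m := -m) (n := -n) (by omega)
      (by rw [zpow_neg, zpow_neg, ← mul_inv, h, inv_one]) (by omega)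
  obtain ⟨k, hk⟩ := Int.eq_ofNat_of_zero_le hk
  rcases (by omega : 0 < n ∨ 0 < m) with hn | hm
  · left
    lift n to ℕ using hn.le
    refine hsat _ n (by omega) ?_
    have : (p / q) ^ (n : ℤ) = p ^ (k : ℤ) := by
      rw [← hk, div_zpow, eq_inv_of_mul_eq_one_right h, div_inv_eq_mul, ← zpow_add, add_comm]
    rw [← zpow_natCast, this, zpow_natCast]
    exact pow_mem hp k
  · right
    lift m to ℕ using hm.le
    refine hsat _ m (by omega) ?_
    have : (p / q)⁻¹ ^ (m : ℤ) = q ^ (k : ℤ) := by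
      rw [← hk, inv_div, div_zpow, eq_inv_of_mul_eq_one_left h, div_inv_eq_mul, ← zpow_add]
    rw [← zpow_natCast, this, zpow_natCast]
    exact pow_mem hq k

theorem exists_mem_div_eq_of_closure_eq_top (hQ : Subgroup.closure (Q : Set H) = ⊤) (x : H) :
    ∃ p ∈ Q, ∃ q ∈ Q, p / q = x := by
  induction (hQ ▸ Subgroup.mem_top x : x ∈ Subgroup.closure (Q : Set H))
    using Subgroup.closure_induction with
  | mem x hx => exact ⟨x, hx, 1, Q.one_mem, div_one x⟩
  | one => exact ⟨1, Q.one_mem, 1, Q.one_mem, div_one 1⟩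
  | mul x y _ _ hx hy =>
    obtain ⟨p, hp, q, hq, rfl⟩ := hx
    obtain ⟨p', hp', q', hq', rfl⟩ := hy
    exact ⟨p * p', mul_mem hp hp', q * q', mul_mem hq hq', (div_mul_div_comm p q p' q').symm⟩
  | inv x _ hx =>
    obtain ⟨p, hp, q, hq, rfl⟩ := hx
    exact ⟨q, hq, p, hp, (inv_div p q).symm⟩

theorem IsSaturated.isValuative (hsat : Q.IsSaturated)
    (hgen : Subgroup.closure (Q : Set H) = ⊤)
    (hrel : ∀ y z : H, ∃ m n : ℤ, (m ≠ 0 ∨ n ≠ 0) ∧ y ^ m * z ^ n = 1) : Q.IsValuative := by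
  intro x
  obtain ⟨p, hp, q, hq, rfl⟩ := exists_mem_div_eq_of_closure_eq_top hgen x
  obtain ⟨m, n, hmn, h⟩ := hrel p q
  exact hsat.div_mem_or_inv_mem_of_zpow_mul_zpow_eq_one hp hq hmn h

end Submonoid

theorem exists_zpow_mul_zpow_eq_one_of_isCyclic {H : Type*} [Group H] [IsCyclic H] (y z : H) :
    ∃ m n : ℤ, (m ≠ 0 ∨ n ≠ 0) ∧ y ^ m * z ^ n = 1 := by
  obtain ⟨g, hg⟩ := IsCyclic.exists_zpow_surjective (G := H)
  obtain ⟨k, rfl⟩ := hg y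
  obtain ⟨l, rfl⟩ := hg z
  by_cases hk : k = 0
  · exact ⟨1, 0, Or.inl one_ne_zero, by simp [hk]⟩
  · refine ⟨l, -k, Or.inr (neg_ne_zero.2 hk), ?_⟩
    rw [← zpow_mul, ← zpow_mul, ← zpow_add, mul_comm, mul_neg, add_neg_cancel, zpow_zero]

theorem Submonoid.subgroupClosure_map_eq_top {G N : Type*} [Group G] [Group N] {f : G →* N}
    (hf : Function.Surjective f) {P : Submonoid G} (hP : Subgroup.closure (P : Set G) = ⊤) :
    Subgroup.closure (P.map f : Set N) = ⊤ := by
  rw [Submonoid.coe_map, ← MonoidHom.map_closure, hP, ← MonoidHom.range_eq_map,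
    MonoidHom.range_eq_top.2 hf]

namespace QuotientGroup

variable {G : Type*} [CommGroup G] {P : Submonoid G} {U : Subgroup G}

theorem mk'_mem_map_iff (hUP : ∀ u ∈ U, u ∈ P) {x : G} :
    mk' U x ∈ P.map (mk' U) ↔ x ∈ P := by
  refine ⟨fun ⟨p, hp, h⟩ ↦ ?_, fun hx ↦ ⟨x, hx, rfl⟩⟩
  rw [← mul_inv_cancel_left p x]
  exact P.mul_mem hp (hUP _ (QuotientGroup.eq.1 h))

theorem isValuative_map_mk'_iff (hUP : ∀ u ∈ U, u ∈ P) :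
    (P.map (mk' U)).IsValuative ↔ P.IsValuative := by
  refine ⟨fun h x ↦ ?_, fun h y ↦ ?_⟩
  · simpa only [← map_inv, mk'_mem_map_iff hUP] using h (mk' U x)
  · obtain ⟨x, rfl⟩ := mk'_surjective U y
    simpa only [← map_inv, mk'_mem_map_iff hUP] using h x

theorem isSharp_map_mk' (hU : ∀ x : G, x ∈ U ↔ x ∈ P ∧ x⁻¹ ∈ P) :
    (P.map (mk' U)).IsSharp := by
  have hUP (u : G) (hu : u ∈ U) : u ∈ P := ((hU u).1 hu).1
  intro y hy hy'
  obtain ⟨x, rfl⟩ := mk'_surjective U y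
  rw [← map_inv, mk'_mem_map_iff hUP] at hy'
  rw [mk'_mem_map_iff hUP] at hy
  exact (eq_one_iff x).2 ((hU x).2 ⟨hy, hy'⟩)

theorem isSaturated_map_mk' (hUP : ∀ u ∈ U, u ∈ P) (hsat : P.IsSaturated) :
    (P.map (mk' U)).IsSaturated := by
  intro y n hn hy
  obtain ⟨x, rfl⟩ := mk'_surjective U y
  rw [← map_pow, mk'_mem_map_iff hUP] at hy
  exact (mk'_mem_map_iff hUP).2 (hsat x n hn hy)

end QuotientGroup

/-- A finitely generated integral monoid `P` (realized inside its groupification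
`G = P^gp`) is valuative iff its sharpening `P/P^×` (inside `G/P^×`) is valuative; and a
fine saturated monoid `P` is valuative iff the finitely generated abelian group
`P^gp/P^×` has rank at most 1 (any two elements satisfy a nontrivial relation). -/
theorem stmt_11 {G : Type u} [CommGroup G] (P : Submonoid G)
    (hgen : Subgroup.closure (P : Set G) = ⊤) (hfg : P.FG)
    (U : Subgroup G) (hU : ∀ x : G, x ∈ U ↔ x ∈ P ∧ x⁻¹ ∈ P) :
    ((∀ x : G, x ∈ P ∨ x⁻¹ ∈ P) ↔
      (∀ y : G ⧸ U, y ∈ P.map (QuotientGroup.mk' U) ∨ y⁻¹ ∈ P.map (QuotientGroup.mk' U))) ∧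
    ((∀ (x : G) (n : ℕ), 1 ≤ n → x ^ n ∈ P → x ∈ P) →
      ((∀ x : G, x ∈ P ∨ x⁻¹ ∈ P) ↔
        (∀ y z : G ⧸ U, ∃ m n : ℤ, (m ≠ 0 ∨ n ≠ 0) ∧ y ^ m * z ^ n = 1))) := by
  have hUP (u : G) (hu : u ∈ U) : u ∈ P := ((hU u).1 hu).1
  have hiff : P.IsValuative ↔ (P.map (QuotientGroup.mk' U)).IsValuative :=
    (QuotientGroup.isValuative_map_mk'_iff hUP).symm
  refine ⟨hiff, fun hsat ↦ hiff.trans ⟨fun hval ↦ ?_, fun hrel ↦ ?_⟩⟩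
  · have := hval.isCyclic (QuotientGroup.isSharp_map_mk' hU) (hfg.map _)
    exact exists_zpow_mul_zpow_eq_one_of_isCyclic
  · exact (QuotientGroup.isSaturated_map_mk' hUP hsat).isValuative
      (Submonoid.subgroupClosure_map_eq_top (QuotientGroup.mk'_surjective U) hgen) hrel
end

section
/- If θ : Q → P is an injective morphism of integral monoids such that for every p ∈ P there exists n ≥ 1 with pⁿ ∈ θ(Q) (i.e. θ is of Kummer type), and Q is saturated, then θ is exact. -/
/-- In a commutative group generated (as a group) by a submonoid `Q`, every element is a
quotient of two elements of `Q`. -/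
lemma frac_of_closure_top {G : Type*} [CommGroup G] (Q : Submonoid G)
    (hgenQ : Subgroup.closure (Q : Set G) = ⊤) (x : G) :
    ∃ a b : G, a ∈ Q ∧ b ∈ Q ∧ x = a * b⁻¹ := by
  have hx : x ∈ Subgroup.closure (Q : Set G) := by rw [hgenQ]; trivial
  induction hx using Subgroup.closure_induction with
  | mem y hy => exact ⟨y, 1, hy, Q.one_mem, by simp⟩
  | one => exact ⟨1, 1, Q.one_mem, Q.one_mem, by simp⟩
  | mul y z _ _ hy hz =>
    obtain ⟨a, b, ha, hb, rfl⟩ := hy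
    obtain ⟨c, d, hc, hd, rfl⟩ := hz
    exact ⟨a * c, b * d, Q.mul_mem ha hc, Q.mul_mem hb hd, by simp [mul_inv, mul_comm, mul_left_comm, mul_assoc]⟩
  | inv y _ hy =>
    obtain ⟨a, b, ha, hb, rfl⟩ := hy
    exact ⟨b, a, hb, ha, by simp [mul_inv, mul_comm, mul_left_comm, mul_assoc]⟩

/-- Every morphism of Kummer type between integral monoids is exact: if `θ : Q → P` is
injective on `Q` (realized inside groupifications `G = Q^gp`, `H = P^gp`) and every element
of `P` has a positive power in the image of `Q`, and `Q` is saturated, then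
`Q = (θ^gp)⁻¹(P)`, i.e. any `x ∈ G` with `θ x ∈ P` lies in `Q`. -/
theorem stmt_14 {G H : Type*} [CommGroup G] [CommGroup H]
    (Q : Submonoid G) (P : Submonoid H)
    (hgenQ : Subgroup.closure (Q : Set G) = ⊤)
    (hgenP : Subgroup.closure (P : Set H) = ⊤)
    (θ : G →* H) (hθQP : ∀ x : G, x ∈ Q → θ x ∈ P)
    (hinj : ∀ a b : G, a ∈ Q → b ∈ Q → θ a = θ b → a = b)
    (hkummer : ∀ p : H, p ∈ P → ∃ (n : ℕ) (q : G), 1 ≤ n ∧ q ∈ Q ∧ θ q = p ^ n)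
    (hQsat : ∀ (x : G) (n : ℕ), 1 ≤ n → x ^ n ∈ Q → x ∈ Q) :
    ∀ x : G, θ x ∈ P → x ∈ Q := by
  intro x hxP
  obtain ⟨n, q, hn, hq, hθq⟩ := hkummer (θ x) hxP
  obtain ⟨a, b, ha, hb, rfl⟩ := frac_of_closure_top Q hgenQ x
  -- θ (a^n) = θ (q * b^n)
  have key : θ (a ^ n) = θ (q * b ^ n) := by
    have : θ ((a * b⁻¹) ^ n) = θ q := by rw [map_pow, ← hθq]
    rw [map_mul, ← this]
    simp [mul_pow, map_pow, mul_assoc]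
  have heq : a ^ n = q * b ^ n :=
    hinj _ _ (Q.pow_mem ha n) (Q.mul_mem hq (Q.pow_mem hb n)) key
  have hxn : (a * b⁻¹) ^ n ∈ Q := by
    have : (a * b⁻¹) ^ n = q := by
      rw [mul_pow, heq]
      simp [mul_inv, mul_comm, mul_left_comm, mul_assoc]
    rw [this]; exact hq
  exact hQsat _ n hn hxn
end
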